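/- Let L_4 = U^{⊕3} ⊕ E8(-1)^{⊕2} ⊕ ⟨-6⟩. If v ∈ L_4 is a primitive vector with div(v) = 2, then v² ≡ 2 (mod 8). -/

import Mathlib

open Matrix

/-- Gram matrix of the hyperbolic plane `U`. -/
def U2 : Matrix (Fin 2) (Fin 2) ℤ := !![0, 1; 1, 0]

/-- Gram matrix of the negative definite `E8(-1)` lattice. -/
def E8neg : Matrix (Fin 8) (Fin 8) ℤ :=
  !![-2, 1, 0, 0, 0, 0, 0, 0;
      1,-2, 1, 0, 0, 0, 0, 0;
      0, 1,-2, 1, 0, 0, 0, 0;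
      0, 0, 1,-2, 1, 0, 0, 0;
      0, 0, 0, 1,-2, 1, 0, 1;
      0, 0, 0, 0, 1,-2, 1, 0;
      0, 0, 0, 0, 0, 1,-2, 0;
      0, 0, 0, 0, 1, 0, 0,-2]

/-- Index type of the unimodular summand `U^3 ⊕ E8(-1)^2`. -/
abbrev KIdx := (Fin 2 ⊕ (Fin 2 ⊕ Fin 2)) ⊕ (Fin 8 ⊕ Fin 8)

/-- Gram matrix of `U^3 ⊕ E8(-1)^2`. -/
def GramK : Matrix KIdx KIdx ℤ :=
  Matrix.fromBlocks
    (Matrix.fromBlocks U2 0 0 (Matrix.fromBlocks U2 0 0 U2)) 0 0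
    (Matrix.fromBlocks E8neg 0 0 E8neg)

/-- Index type of `L_n = U^3 ⊕ E8(-1)^2 ⊕ ⟨-(2n-2)⟩`. -/
abbrev LIdx := KIdx ⊕ Fin 1

/-- Gram matrix of `L_n = U^3 ⊕ E8(-1)^2 ⊕ ⟨-(2n-2)⟩`. -/
def GramL (n : ℕ) : Matrix LIdx LIdx ℤ :=
  Matrix.fromBlocks GramK 0 0 !![-(2 * (n : ℤ) - 2)]

/-- The bilinear form of `L_n`. -/
def bil (n : ℕ) (v w : LIdx → ℤ) : ℤ := v ⬝ᵥ ((GramL n).mulVec w)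

/-- The `ℚ`-bilinear extension of the form of `L_n` to `L_n ⊗ ℚ`. -/
def bilQ (n : ℕ) (v w : LIdx → ℚ) : ℚ :=
  v ⬝ᵥ (((GramL n).map (Int.cast : ℤ → ℚ)).mulVec w)

/-- The inclusion `L_n ↪ L_n ⊗ ℚ`. -/
def toQ (v : LIdx → ℤ) : LIdx → ℚ := fun i => (v i : ℚ)

/-- The generator `δ` of the summand `⟨-(2n-2)⟩`. -/
def deltaVec : LIdx → ℤ := fun i => if i = Sum.inr 0 then 1 else 0

/-- A lattice vector is primitive if it is not a nontrivial multiple of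
another lattice vector. -/
def IsPrimitive (v : LIdx → ℤ) : Prop :=
  ∀ (k : ℤ) (w : LIdx → ℤ), v = k • w → IsUnit k

/-- `HasDiv n v m` says that `div(v) = m`, i.e. `(v, L_n) = mℤ`. -/
def HasDiv (n : ℕ) (v : LIdx → ℤ) (m : ℤ) : Prop :=
  Ideal.span (Set.range fun w => bil n v w) = Ideal.span {m}

/-!
Write `L_4 = K ⊕ ⟨-6⟩` with `K = U^3 ⊕ E8(-1)^2` even and unimodular, and `v = x + dδ`.
Since `div(v) = 2`, the functional `(x, ·)` on `K` is divisible by 2, and unimodularity of `K`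
gives `x = 2y`. Primitivity of `v` then forces `d` odd, so
`v² = 4y² - 6d² ≡ 0 - 6 ≡ 2 (mod 8)`, as `y²` is even and `d² ≡ 1 (mod 8)`.
-/

section

variable {ι R : Type*} [Fintype ι] [CommSemiring R]

theorem Matrix.dvd_apply_of_forall_dvd_vecMul [DecidableEq ι] {A N : Matrix ι ι R}
    (hAN : A * N = 1) {m : R} {x : ι → R} (h : ∀ j, m ∣ (x ᵥ* A) j) (i : ι) : m ∣ x i := by
  rw [← vecMul_one x, ← hAN, ← vecMul_vecMul]
  exact Finset.dvd_sum fun j _ => (h j).mul_right _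

theorem Matrix.dotProduct_mulVec_self_of_eq_add_transpose {A B : Matrix ι ι R} (hA : A = B + Bᵀ)
    (x : ι → R) : x ⬝ᵥ A *ᵥ x = 2 * (x ⬝ᵥ B *ᵥ x) := by
  rw [hA, add_mulVec, dotProduct_add, mulVec_transpose, dotProduct_comm x (x ᵥ* B),
    ← dotProduct_mulVec, two_mul]

end

theorem U2_mul_self : U2 * U2 = 1 := by decide

def E8negInv : Matrix (Fin 8) (Fin 8) ℤ :=
  !![-2, -3, -4, -5, -6, -4, -2, -3;
     -3, -6, -8, -10, -12, -8, -4, -6;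
     -4, -8, -12, -15, -18, -12, -6, -9;
     -5, -10, -15, -20, -24, -16, -8, -12;
     -6, -12, -18, -24, -30, -20, -10, -15;
     -4, -8, -12, -16, -20, -14, -7, -10;
     -2, -4, -6, -8, -10, -7, -4, -5;
     -3, -6, -9, -12, -15, -10, -5, -8]

theorem E8neg_mul_inv : E8neg * E8negInv = 1 := by decide

def GramKInv : Matrix KIdx KIdx ℤ :=
  fromBlocks (fromBlocks U2 0 0 (fromBlocks U2 0 0 U2)) 0 0 (fromBlocks E8negInv 0 0 E8negInv)

theorem GramK_mul_inv : GramK * GramKInv = 1 := by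
  simp [GramK, GramKInv, fromBlocks_multiply, U2_mul_self, E8neg_mul_inv, fromBlocks_one]

def U2Half : Matrix (Fin 2) (Fin 2) ℤ := !![0, 1; 0, 0]

theorem U2_eq_add_transpose : U2 = U2Half + U2Halfᵀ := by decide

def E8negHalf : Matrix (Fin 8) (Fin 8) ℤ :=
  !![-1, 1, 0, 0, 0, 0, 0, 0;
      0,-1, 1, 0, 0, 0, 0, 0;
      0, 0,-1, 1, 0, 0, 0, 0;
      0, 0, 0,-1, 1, 0, 0, 0;
      0, 0, 0, 0,-1, 1, 0, 1;
      0, 0, 0, 0, 0,-1, 1, 0;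
      0, 0, 0, 0, 0, 0,-1, 0;
      0, 0, 0, 0, 0, 0, 0,-1]

theorem E8neg_eq_add_transpose : E8neg = E8negHalf + E8negHalfᵀ := by decide

def GramKHalf : Matrix KIdx KIdx ℤ :=
  fromBlocks (fromBlocks U2Half 0 0 (fromBlocks U2Half 0 0 U2Half)) 0 0
    (fromBlocks E8negHalf 0 0 E8negHalf)

theorem GramK_eq_add_transpose : GramK = GramKHalf + GramKHalfᵀ := by
  simp [GramK, GramKHalf, fromBlocks_transpose, fromBlocks_add, ← U2_eq_add_transpose,
    ← E8neg_eq_add_transpose]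

theorem even_dotProduct_GramK_mulVec_self (x : KIdx → ℤ) : Even (x ⬝ᵥ GramK *ᵥ x) :=
  ⟨_, (dotProduct_mulVec_self_of_eq_add_transpose GramK_eq_add_transpose x).trans (two_mul _)⟩

theorem bil_eq (n : ℕ) (v w : LIdx → ℤ) :
    bil n v w = (v ∘ Sum.inl) ⬝ᵥ GramK *ᵥ (w ∘ Sum.inl)
      - (2 * n - 2) * v (Sum.inr 0) * w (Sum.inr 0) := by
  conv_lhs =>
    rw [bil, GramL, fromBlocks_mulVec, ← Sum.elim_comp_inl_inr v, sumElim_dotProduct_sumElim]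
  simp only [dotProduct, Function.comp_apply, zero_mulVec, Pi.add_apply, mulVec,
    Fintype.sum_sum_type, Finset.univ_unique, Fin.default_eq_zero, cons_mulVec, cons_val_fin_one,
    Finset.sum_singleton, empty_mulVec, Pi.zero_apply, add_zero, zero_add]
  ring

theorem bil_single_inl (n : ℕ) (v : LIdx → ℤ) (j : KIdx) :
    bil n v (Pi.single (Sum.inl j) 1) = ((v ∘ Sum.inl) ᵥ* GramK) j := by
  rw [bil, dotProduct_mulVec, dotProduct_single, mul_one, GramL, vecMul_fromBlocks]
  simp

theorem HasDiv.dvd_bil {n : ℕ} {v : LIdx → ℤ} {m : ℤ} (h : HasDiv n v m) (w : LIdx → ℤ) :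
    m ∣ bil n v w := by
  rw [← Ideal.mem_span_singleton, ← h]
  exact Ideal.subset_span ⟨w, rfl⟩

theorem HasDiv.dvd_apply_inl {n : ℕ} {v : LIdx → ℤ} {m : ℤ} (h : HasDiv n v m) (j : KIdx) :
    m ∣ v (Sum.inl j) :=
  Matrix.dvd_apply_of_forall_dvd_vecMul GramK_mul_inv (x := v ∘ Sum.inl)
    (fun i => bil_single_inl n v i ▸ h.dvd_bil _) j

theorem IsPrimitive.isUnit_of_forall_dvd {v : LIdx → ℤ} (hv : IsPrimitive v) {m : ℤ}
    (h : ∀ i, m ∣ v i) : IsUnit m := by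
  choose w hw using h
  exact hv m w (funext hw)

theorem IsPrimitive.odd_apply_inr {n : ℕ} {v : LIdx → ℤ} (hv : IsPrimitive v)
    (hdiv : HasDiv n v 2) : Odd (v (Sum.inr 0)) := by
  by_contra hodd
  rw [Int.not_odd_iff_even, even_iff_two_dvd] at hodd
  have := hv.isUnit_of_forall_dvd (m := 2) fun
    | .inl j => hdiv.dvd_apply_inl j
    | .inr 0 => hodd
  norm_num [Int.isUnit_iff] at this

/-- in `L_4`, a primitive vector of divisor 2 has `v² ≡ 2 (mod 8)`. -/
theorem stmt_4 (v : LIdx → ℤ) (hprim : IsPrimitive v) (hdiv : HasDiv 4 v 2) :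
    bil 4 v v ≡ 2 [ZMOD 8] := by
  obtain ⟨y, hy⟩ : ∃ y, v ∘ Sum.inl = 2 • y :=
    ⟨fun j => v (Sum.inl j) / 2,
      funext fun j => by simp [Int.mul_ediv_cancel' (hdiv.dvd_apply_inl j)]⟩
  obtain ⟨a, ha⟩ := even_dotProduct_GramK_mulVec_self y
  obtain ⟨k, hk⟩ := hprim.odd_apply_inr hdiv
  rw [Int.modEq_iff_dvd]
  refine ⟨3 * k ^ 2 + 3 * k + 1 - a, ?_⟩
  rw [bil_eq, hy, hk, mulVec_smul, smul_dotProduct, dotProduct_smul, ha]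
  ring
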